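/- arXiv:2406.12561 — 3 statements merged into one kernel-verified Lean document; each statement's English description precedes it below -/
import Mathlib

section
/- Let L/Q be a Galois extension of degree p ∈ {3,5}, let ℓ be a prime, and let E be an elliptic curve over Q such that the mod-ℓ Galois representation ρ_{E,ℓ}: Gal(Q̄/Q) → GL_2(Z/ℓZ) is surjective. Then E(L)[ℓ] = 0. -/
open Matrix

lemma exists_GL_mulVec_single {K : Type*} [Field K] [DecidableEq K]
    {v : Fin 2 → K} (hv : v ≠ 0) (j : Fin 2) :
    ∃ U : GL (Fin 2) K, (U : Matrix (Fin 2) (Fin 2) K).mulVec (Pi.single j 1) = v := by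
  obtain ⟨k, hk⟩ := Function.ne_iff.mp hv
  simp only [Pi.zero_apply] at hk
  set M : Matrix (Fin 2) (Fin 2) K :=
    Matrix.of (fun i j' => if j' = j then v i else if i = k then 0 else 1) with hM
  have hdet : M.det ≠ 0 := by
    rw [Matrix.det_fin_two]
    fin_cases j <;> fin_cases k <;> simp_all [hM, sub_eq_zero]
  refine ⟨Matrix.GeneralLinearGroup.mkOfDetNeZero M hdet, ?_⟩
  have hcoe : ((Matrix.GeneralLinearGroup.mkOfDetNeZero M hdet : GL (Fin 2) K) :
      Matrix (Fin 2) (Fin 2) K) = M := rfl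
  funext i
  rw [hcoe, Matrix.mulVec_single]
  simp [M]

lemma eq_one_of_mulVec_single {K : Type*} [Field K] [DecidableEq K]
    {n : Matrix (Fin 2) (Fin 2) K}
    (h : ∀ j : Fin 2, n.mulVec (Pi.single j 1) = Pi.single j 1) :
    n = 1 := by
  ext i j
  have := congrFun (h j) i
  rw [Matrix.mulVec_single] at this
  simp only [MulOpposite.op_one, one_smul, Matrix.col_apply] at this
  rw [this]
  simp [Pi.single_apply, Matrix.one_apply, eq_comm]

open WeierstrassCurve WeierstrassCurve.Affine

open Classical in
/-- Let `L/ℚ` be a Galois extension of degree `p ∈ {3,5}`, `ℓ` a prime, and `E` an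
elliptic curve over `ℚ` whose mod-`ℓ` Galois representation
`ρ : Gal(ℚ̄/ℚ) → GL₂(ℤ/ℓℤ)` (expressed via a basis `b` of the `ℓ`-torsion of `E(ℚ̄)`,
with Galois-equivariance recorded by `hequiv`) is surjective.  Then `E(L)[ℓ] = 0`. -/
theorem stmt_3 (p ℓ : ℕ) (hp : p = 3 ∨ p = 5) (hℓ : ℓ.Prime)
    (W : WeierstrassCurve ℚ) [W.IsElliptic]
    (L : IntermediateField ℚ (AlgebraicClosure ℚ)) [IsGalois ℚ L]
    (hdeg : Module.finrank ℚ L = p)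
    (ρ : ((AlgebraicClosure ℚ) ≃ₐ[ℚ] (AlgebraicClosure ℚ)) →*
      Matrix.GeneralLinearGroup (Fin 2) (ZMod ℓ))
    (b : (Fin 2 → ZMod ℓ) ≃ {P : Affine.Point (W.baseChange (AlgebraicClosure ℚ)) // ℓ • P = 0})
    (hadd : ∀ v w : Fin 2 → ZMod ℓ, (b (v + w) : Affine.Point (W.baseChange (AlgebraicClosure ℚ))) = b v + b w)
    (hequiv : ∀ (σ : (AlgebraicClosure ℚ) ≃ₐ[ℚ] (AlgebraicClosure ℚ))
      (v : Fin 2 → ZMod ℓ),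
      Point.map (W' := W) σ.toAlgHom (b v : Affine.Point (W.baseChange (AlgebraicClosure ℚ))) =
        (b (((ρ σ) : Matrix (Fin 2) (Fin 2) (ZMod ℓ)).mulVec v) : Affine.Point (W.baseChange (AlgebraicClosure ℚ))))
    (hsurj : Function.Surjective ρ) :
    ∀ P : Affine.Point (W.baseChange L), ℓ • P = 0 → P = 0 := by
  haveI : Fact ℓ.Prime := ⟨hℓ⟩
  haveI : FiniteDimensional ℚ L := by
    apply FiniteDimensional.of_finrank_pos
    rw [hdeg]; rcases hp with h | h <;> omega
  intro P hP
  by_contra hPne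
  -- coercion of b is injective
  have hbinj : Function.Injective (fun v : Fin 2 → ZMod ℓ => (b v : Affine.Point (W.baseChange (AlgebraicClosure ℚ)))) :=
    Subtype.val_injective.comp b.injective
  -- the image point
  set Q : Affine.Point (W.baseChange (AlgebraicClosure ℚ)) := Point.map (W' := W) L.val P with hQ
  have hQtor : ℓ • Q = 0 := by rw [hQ, ← map_nsmul, hP, map_zero]
  set v : Fin 2 → ZMod ℓ := b.symm ⟨Q, hQtor⟩ with hv
  have hbv : (b v : Affine.Point (W.baseChange (AlgebraicClosure ℚ))) = Q := by rw [hv, Equiv.apply_symm_apply]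
  have hb0 : (b 0 : Affine.Point (W.baseChange (AlgebraicClosure ℚ))) = 0 := by
    have h := hadd 0 0
    rw [zero_add] at h
    exact (left_eq_add.mp h)
  have hvne : v ≠ 0 := by
    intro h0
    apply hPne
    apply Point.map_injective (W' := W) (f := L.val)
    rw [← hQ, ← hbv, h0, hb0, map_zero]
  -- elements of the fixing subgroup fix v
  have hfixv : ∀ σ : (AlgebraicClosure ℚ) ≃ₐ[ℚ] (AlgebraicClosure ℚ),
      σ ∈ L.fixingSubgroup →
      ((ρ σ : Matrix (Fin 2) (Fin 2) (ZMod ℓ)).mulVec v) = v := by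
    intro σ hσ
    have hcomp : σ.toAlgHom.comp L.val = L.val := by
      ext x
      exact (L.mem_fixingSubgroup_iff σ).mp hσ x x.2
    have hfix : Point.map (W' := W) σ.toAlgHom Q = Q := by
      rw [hQ, Point.map_map, hcomp]
    apply hbinj
    have h2 := hequiv σ v
    rw [hbv, hfix] at h2
    show (b _ : Affine.Point (W.baseChange (AlgebraicClosure ℚ))) = (b v : Affine.Point (W.baseChange (AlgebraicClosure ℚ)))
    rw [← h2, hbv]
  -- the fixing subgroup is the kernel of the restriction map, hence normal
  have hnL : Normal ℚ L := inferInstance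
  haveI : Normal ℚ (AlgebraicClosure ℚ) := by
    have h := @IsAlgClosure.normal ℚ (AlgebraicClosure ℚ) _ _ (AlgebraicClosure.instAlgebra ℚ)
      (AlgebraicClosure.instIsAlgClosure ℚ)
    convert h
    exact Subsingleton.elim _ _
  have hker : L.fixingSubgroup = (AlgEquiv.restrictNormalHom (K₁ := AlgebraicClosure ℚ) L).ker :=
    (@IntermediateField.restrictNormalHom_ker ℚ _ _ _ _ L hnL).symm
  have hnormal : (L.fixingSubgroup).Normal := by
    rw [hker]; exact MonoidHom.normal_ker _
  -- elements of the image of the fixing subgroup fix every vector in the orbit of v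
  have hfixall : ∀ σ ∈ L.fixingSubgroup, ∀ g : GL (Fin 2) (ZMod ℓ),
      ((ρ σ : Matrix (Fin 2) (Fin 2) (ZMod ℓ))).mulVec
        ((g : Matrix (Fin 2) (Fin 2) (ZMod ℓ)).mulVec v) =
      (g : Matrix (Fin 2) (Fin 2) (ZMod ℓ)).mulVec v := by
    intro σ hσ g
    obtain ⟨τ, hτ⟩ := hsurj g
    have hσ' : τ⁻¹ * σ * τ ∈ L.fixingSubgroup := hnormal.conj_mem' σ hσ τ
    have hfv := hfixv _ hσ'
    rw [_root_.map_mul, _root_.map_mul, map_inv, hτ] at hfv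
    have h2 := congrArg (fun w => (g : Matrix (Fin 2) (Fin 2) (ZMod ℓ)).mulVec w) hfv
    simp only [Matrix.mulVec_mulVec] at h2
    have hgrp : g * (g⁻¹ * ρ σ * g) = ρ σ * g := by group
    rw [← Units.val_mul, hgrp, Units.val_mul, ← Matrix.mulVec_mulVec] at h2
    exact h2
  -- hence they map to the identity under ρ
  have hρ1 : ∀ σ ∈ L.fixingSubgroup, ρ σ = 1 := by
    intro σ hσ
    refine Units.ext (eq_one_of_mulVec_single fun j => ?_)
    obtain ⟨U, hU⟩ := exists_GL_mulVec_single hvne j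
    have hUv : ((U⁻¹ : GL (Fin 2) (ZMod ℓ)) : Matrix (Fin 2) (Fin 2) (ZMod ℓ)).mulVec v =
        Pi.single j 1 := by
      rw [← hU, Matrix.mulVec_mulVec, ← Units.val_mul, inv_mul_cancel, Units.val_one,
        Matrix.one_mulVec]
    have := hfixall σ hσ U⁻¹
    rwa [hUv] at this
  -- so the fixing subgroup maps to the trivial subgroup
  have hmapbot : Subgroup.map ρ L.fixingSubgroup = ⊥ := by
    rw [eq_bot_iff]
    rintro x ⟨σ, hσ, rfl⟩
    simpa [Subgroup.mem_bot] using hρ1 σ hσ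
  -- index computation
  have h1 : (Subgroup.map ρ L.fixingSubgroup).index ∣ L.fixingSubgroup.index :=
    Subgroup.index_map_dvd _ hsurj
  rw [hmapbot, Subgroup.index_bot] at h1
  have hKidx : L.fixingSubgroup.index = p := by
    rw [hker, Subgroup.index_ker,
      (AlgEquiv.restrictNormalHom (K₁ := AlgebraicClosure ℚ) L).range_eq_top_of_surjective
        (AlgEquiv.restrictNormalHom_surjective _),
      Subgroup.card_top, IsGalois.card_aut_eq_finrank, hdeg]
  rw [hKidx] at h1
  have hcard : Nat.card (GL (Fin 2) (ZMod ℓ)) = (ℓ ^ 2 - 1) * (ℓ ^ 2 - ℓ) := by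
    rw [Matrix.card_GL_field]
    simp [Fin.prod_univ_two, ZMod.card]
  rw [hcard] at h1
  have hl2 := hℓ.two_le
  have hll : 4 ≤ ℓ * ℓ := Nat.mul_le_mul hl2 hl2
  have hll2 : 2 * ℓ ≤ ℓ * ℓ := Nat.mul_le_mul_right ℓ hl2
  have h3 : 3 ≤ ℓ ^ 2 - 1 := by rw [pow_two]; omega
  have h4 : 2 ≤ ℓ ^ 2 - ℓ := by rw [pow_two]; omega
  have h6 : 6 ≤ (ℓ ^ 2 - 1) * (ℓ ^ 2 - ℓ) := Nat.mul_le_mul h3 h4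
  have hle := Nat.le_of_dvd (by rcases hp with h | h <;> omega) h1
  rcases hp with h | h <;> omega
end

section
/- For a prime ℓ ≥ 5, the number of pairs (A,B) ∈ (Z/ℓ²Z)² with 4A³ + 27B² ≠ 0 equals ℓ⁴ − 2ℓ² + ℓ. -/
/-!
Over a commutative ring in which 2 and 3 are invertible, the equation 4A³ + 27B² = 0 forces A and B
to be both units or both non-units. Unit solutions are exactly the points (-3t², 2t³) of the cuspidal
cubic, with t = -3B/(2A) a unit determined by the point. In ℤ/ℓ²ℤ the non-units are the multiples
of ℓ, so any product of two of them vanishes and every pair of non-units is a solution. Hence there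
are φ(ℓ²) + ℓ² = 2ℓ² - ℓ solutions among the ℓ⁴ pairs.
-/

open Set

section CuspidalCubic

variable {R : Type*} [CommRing R]

variable (R) in
/-- The pairs `(A, B)` for which the cubic `x³ + Ax + B` has vanishing discriminant. -/
def discZeroSet : Set (R × R) := {x | 4 * x.1 ^ 3 + 27 * x.2 ^ 2 = 0}

def cuspParam (t : Rˣ) : R × R := (-3 * t ^ 2, 2 * t ^ 3)

lemma cuspParam_mem_discZeroSet (t : Rˣ) : cuspParam t ∈ discZeroSet R := by
  simp only [cuspParam, discZeroSet, mem_ofPred_eq]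
  ring

lemma isUnit_fst_cuspParam (h3 : IsUnit (3 : R)) (t : Rˣ) : IsUnit (cuspParam t).1 :=
  h3.neg.mul (t.isUnit.pow 2)

lemma cuspParam_injective (h2 : IsUnit (2 : R)) (h3 : IsUnit (3 : R)) :
    Function.Injective (cuspParam (R := R)) := by
  intro t s h
  simp only [cuspParam, Prod.mk.injEq] at h
  have hsq : t ^ 2 = s ^ 2 := Units.ext (by push_cast; exact h3.neg.mul_left_cancel h.1)
  have hcube : t ^ 3 = s ^ 3 := Units.ext (by push_cast; exact h2.mul_left_cancel h.2)
  calc t = t ^ 3 / t ^ 2 := by rw [pow_succ', mul_div_cancel_right]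
    _ = s ^ 3 / s ^ 2 := by rw [hsq, hcube]
    _ = s := by rw [pow_succ', mul_div_cancel_right]

lemma isUnit_iff_isUnit_of_mem_discZeroSet (h2 : IsUnit (2 : R)) (h3 : IsUnit (3 : R))
    {x : R × R} (hx : x ∈ discZeroSet R) : IsUnit x.1 ↔ IsUnit x.2 := by
  have h4 : IsUnit (4 : R) := by convert h2.pow 2; norm_num
  have h27 : IsUnit (27 : R) := by convert h3.pow 3 using 1; norm_num
  have hx : 4 * x.1 ^ 3 + 27 * x.2 ^ 2 = 0 := hx
  have hx' : 4 * x.1 ^ 3 = -27 * x.2 ^ 2 := by linear_combination hx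
  simpa [IsUnit.mul_iff, h4, h27, isUnit_pow_iff] using congrArg IsUnit hx'

lemma mem_range_cuspParam (h2 : IsUnit (2 : R)) (h3 : IsUnit (3 : R))
    {x : R × R} (hx : x ∈ discZeroSet R) (hA : IsUnit x.1) : x ∈ range cuspParam := by
  obtain ⟨A, B⟩ := x
  obtain ⟨a, rfl⟩ := hA
  obtain ⟨b, rfl⟩ := (isUnit_iff_isUnit_of_mem_discZeroSet h2 h3 hx).mp ⟨a, rfl⟩
  obtain ⟨u2, hu2⟩ := h2
  obtain ⟨u3, hu3⟩ := h3
  refine ⟨-(u3 * b) / (u2 * a), ?_⟩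
  set t := -(u3 * b) / (u2 * a)
  have ht : 2 * (a : R) * t = -(3 * b) := by
    rw [← hu2, ← hu3]; exact_mod_cast congrArg Units.val (mul_div_cancel (u2 * a) (-(u3 * b)))
  have hx : 4 * (a : R) ^ 3 + 27 * (b : R) ^ 2 = 0 := hx
  -- clear the denominator of `t = -3B/(2A)` by multiplying with `(2A)²`, resp. `(2A)³`
  ext
  · apply ((u2 * a) ^ 2).isUnit.mul_left_cancel
    push_cast [hu2, cuspParam]
    linear_combination (-3 * (2 * a * t - 3 * b) : R) * ht - hx
  · apply ((u2 * a) ^ 3).isUnit.mul_left_cancel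
    push_cast [hu2, cuspParam]
    linear_combination
      (2 * ((2 * a * t) ^ 2 + 2 * a * t * (-3 * b) + 9 * b ^ 2) : R) * ht - 2 * (b : R) * hx

lemma discZeroSet_eq (h2 : IsUnit (2 : R)) (h3 : IsUnit (3 : R))
    (hN : ∀ x ∈ nonunits R, ∀ y ∈ nonunits R, x * y = 0) :
    discZeroSet R = range cuspParam ∪ nonunits R ×ˢ nonunits R := by
  ext x
  constructor
  · intro hx
    by_cases hA : IsUnit x.1
    · exact Or.inl (mem_range_cuspParam h2 h3 hx hA)
    · exact Or.inr ⟨hA, fun hB => hA ((isUnit_iff_isUnit_of_mem_discZeroSet h2 h3 hx).mpr hB)⟩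
  · rintro (⟨t, rfl⟩ | ⟨hA, hB⟩)
    · exact cuspParam_mem_discZeroSet t
    · show 4 * x.1 ^ 3 + 27 * x.2 ^ 2 = 0
      linear_combination (4 * x.1) * hN _ hA _ hA + 27 * hN _ hB _ hB

lemma disjoint_range_cuspParam_nonunits (h3 : IsUnit (3 : R)) :
    Disjoint (range cuspParam) (nonunits R ×ˢ nonunits R) := by
  rw [Set.disjoint_left]
  rintro _ ⟨t, rfl⟩ ⟨ht, -⟩
  exact ht (isUnit_fst_cuspParam h3 t)

theorem ncard_discZeroSet [Finite R] (h2 : IsUnit (2 : R)) (h3 : IsUnit (3 : R))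
    (hN : ∀ x ∈ nonunits R, ∀ y ∈ nonunits R, x * y = 0) :
    (discZeroSet R).ncard = Nat.card Rˣ + (nonunits R).ncard ^ 2 := by
  rw [discZeroSet_eq h2 h3 hN, ncard_union_eq (disjoint_range_cuspParam_nonunits h3),
    ncard_range_of_injective (cuspParam_injective h2 h3), ncard_prod, sq]

end CuspidalCubic

theorem card_units_add_ncard_nonunits (M : Type*) [Monoid M] [Finite M] :
    Nat.card Mˣ + (nonunits M).ncard = Nat.card M := by
  rw [← ncard_range_of_injective Units.val_injective]
  exact ncard_add_ncard_compl _

namespace ZMod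

variable {p : ℕ}

lemma mul_eq_zero_of_mem_nonunits_prime_sq (hp : p.Prime) {x y : ZMod (p ^ 2)}
    (hx : x ∈ nonunits _) (hy : y ∈ nonunits _) : x * y = 0 := by
  have : NeZero (p ^ 2) := ⟨pow_ne_zero 2 hp.ne_zero⟩
  have hdvd : ∀ z : ZMod (p ^ 2), z ∈ nonunits _ → p ∣ z.val := fun z hz => by
    rwa [← natCast_zmod_val z, mem_nonunits_iff, isUnit_natCast_iff_not_dvd_pow hp two_pos,
      not_not] at hz
  rw [← natCast_zmod_val x, ← natCast_zmod_val y, ← Nat.cast_mul, natCast_eq_zero_iff]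
  have := mul_dvd_mul (hdvd x hx) (hdvd y hy)
  rwa [← sq] at this

lemma card_units_prime_sq (hp : p.Prime) : Nat.card (ZMod (p ^ 2))ˣ = p * (p - 1) := by
  have : NeZero (p ^ 2) := ⟨pow_ne_zero 2 hp.ne_zero⟩
  rw [Nat.card_eq_fintype_card, card_units_eq_totient, Nat.totient_prime_pow hp two_pos]
  simp

lemma ncard_nonunits_prime_sq (hp : p.Prime) : (nonunits (ZMod (p ^ 2))).ncard = p := by
  have : NeZero (p ^ 2) := ⟨pow_ne_zero 2 hp.ne_zero⟩
  have h := card_units_add_ncard_nonunits (ZMod (p ^ 2))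
  rw [card_units_prime_sq hp, Nat.card_zmod] at h
  obtain ⟨m, rfl⟩ := Nat.exists_eq_add_one.mpr hp.pos
  rw [Nat.add_sub_cancel] at h
  nlinarith

end ZMod

/-- For a prime `ℓ ≥ 5`, the number of pairs `(A,B) ∈ (ℤ/ℓ²ℤ)²` with `4A³ + 27B² ≠ 0`
equals `ℓ⁴ − 2ℓ² + ℓ`. -/
theorem stmt_4 (ℓ : ℕ) (hℓ : ℓ.Prime) (h5 : 5 ≤ ℓ) :
    Nat.card {x : ZMod (ℓ ^ 2) × ZMod (ℓ ^ 2) // 4 * x.1 ^ 3 + 27 * x.2 ^ 2 ≠ 0} =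
      ℓ ^ 4 - 2 * ℓ ^ 2 + ℓ := by
  have : NeZero (ℓ ^ 2) := ⟨pow_ne_zero 2 hℓ.ne_zero⟩
  have hunit : ∀ q : ℕ, q.Prime → q < ℓ → IsUnit (q : ZMod (ℓ ^ 2)) := fun q hq hlt =>
    (ZMod.isUnit_natCast_iff_not_dvd_pow hℓ two_pos).mpr
      fun h => (Nat.le_of_dvd hq.pos h).not_gt hlt
  have hzero := ncard_discZeroSet (by exact_mod_cast hunit 2 Nat.prime_two (by omega))
    (by exact_mod_cast hunit 3 Nat.prime_three (by omega))
    (fun _ hx _ hy => ZMod.mul_eq_zero_of_mem_nonunits_prime_sq hℓ hx hy)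
  have htotal := ncard_add_ncard_compl (discZeroSet (ZMod (ℓ ^ 2)))
  rw [Nat.card_prod, Nat.card_zmod, hzero, ZMod.card_units_prime_sq hℓ,
    ZMod.ncard_nonunits_prime_sq hℓ] at htotal
  change Nat.card ↥(discZeroSet (ZMod (ℓ ^ 2)))ᶜ = _
  rw [Nat.card_coe_set_eq]
  have hle : 2 * ℓ ^ 2 ≤ ℓ ^ 4 := by
    rw [show ℓ ^ 4 = ℓ ^ 2 * ℓ ^ 2 by ring]
    exact Nat.mul_le_mul_right _ (by nlinarith)
  zify [hle, hℓ.one_le] at htotal ⊢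
  linarith
end

section
/- Let A' and B' be integers with A' ≡ 189 (mod 256) and B' ≡ ±1 (mod 256), and set A = 4A', B = 16B'. Then the 2-adic valuation of the discriminant Δ = 4A³ + 27B² of y² = x³ + Ax + B equals 14, and Δ/2¹⁴ ≡ 1 (mod 4). -/
/-! With `A = 4A'` and `B = 16B'` the discriminant is `2⁸ (A'³ + 27B'²)`. Modulo `2⁸` we have
`B'² ≡ 1` and `189³ ≡ 37`, so `A'³ + 27B'² ≡ 2⁶` and hence `Δ ≡ 2¹⁴ (mod 2¹⁶)`. An integer
congruent to `2ᵏ` modulo `2ᵏ⁺²` is `2ᵏ` times a number `≡ 1 (mod 4)`, which gives both claims. -/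

namespace Int

lemma exists_eq_two_pow_mul_of_modEq {n : ℤ} {k : ℕ} (h : n ≡ 2 ^ k [ZMOD 2 ^ (k + 2)]) :
    ∃ t : ℤ, n = 2 ^ k * (1 + 4 * t) := by
  obtain ⟨t, ht⟩ := (Int.modEq_iff_dvd.mp h.symm)
  exact ⟨t, by rw [pow_add] at ht; linear_combination ht⟩

lemma padicValInt_two_eq_of_modEq {n : ℤ} {k : ℕ} (h : n ≡ 2 ^ k [ZMOD 2 ^ (k + 2)]) :
    padicValInt 2 n = k := by
  obtain ⟨t, rfl⟩ := exists_eq_two_pow_mul_of_modEq h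
  have hodd : ¬ (2 : ℤ) ∣ 1 + 4 * t := by omega
  rw [padicValInt.mul (by positivity) (by rintro h; exact hodd (h ▸ dvd_zero 2)),
    padicValInt.eq_zero_of_not_dvd hodd, add_zero]
  rw [show (2 : ℤ) ^ k = ((2 ^ k : ℕ) : ℤ) by norm_cast, padicValInt.of_nat]
  exact padicValNat.prime_pow k

lemma ediv_two_pow_modEq_one_of_modEq {n : ℤ} {k : ℕ} (h : n ≡ 2 ^ k [ZMOD 2 ^ (k + 2)]) :
    n / 2 ^ k ≡ 1 [ZMOD 4] := by
  obtain ⟨t, rfl⟩ := exists_eq_two_pow_mul_of_modEq h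
  rw [Int.mul_ediv_cancel_left _ (by positivity)]
  exact Int.modEq_iff_dvd.mpr ⟨-t, by ring⟩

lemma sq_modEq_one_of_modEq_one_or_neg_one {n a : ℤ}
    (h : a ≡ 1 [ZMOD n] ∨ a ≡ -1 [ZMOD n]) : a ^ 2 ≡ 1 [ZMOD n] := by
  rcases h with h | h <;> simpa using h.pow 2

end Int

/-- If `A' ≡ 189 (mod 256)`, `B' ≡ ±1 (mod 256)`, `A = 4A'` and `B = 16B'`, then the
discriminant `Δ = 4A³ + 27B²` has 2-adic valuation `14`, and its odd part `Δ/2¹⁴` is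
congruent to `1 (mod 4)`. -/
theorem stmt_8 (A' B' A B : ℤ) (hA' : A' ≡ 189 [ZMOD 256])
    (hB' : B' ≡ 1 [ZMOD 256] ∨ B' ≡ -1 [ZMOD 256])
    (hA : A = 4 * A') (hB : B = 16 * B') :
    padicValInt 2 (4 * A ^ 3 + 27 * B ^ 2) = 14 ∧
      (4 * A ^ 3 + 27 * B ^ 2) / 2 ^ 14 ≡ 1 [ZMOD 4] := by
  have hreduced : A' ^ 3 + 27 * B' ^ 2 ≡ 2 ^ 6 [ZMOD 2 ^ 8] :=
    ((hA'.pow 3).add ((Int.sq_modEq_one_of_modEq_one_or_neg_one hB').mul_left 27)).trans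
      (by decide)
  have hΔ : 4 * A ^ 3 + 27 * B ^ 2 ≡ 2 ^ 14 [ZMOD 2 ^ (14 + 2)] := by
    have hscale : 4 * A ^ 3 + 27 * B ^ 2 = 2 ^ 8 * (A' ^ 3 + 27 * B' ^ 2) := by
      rw [hA, hB]; ring
    have hmul := hreduced.mul_left' (c := 2 ^ 8)
    rw [hscale]
    norm_num at hmul ⊢
    exact hmul
  exact ⟨Int.padicValInt_two_eq_of_modEq hΔ, Int.ediv_two_pow_modEq_one_of_modEq hΔ⟩
end
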